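/- There exists exactly one 16-tuple (K01, P01, P1100, P1010, P0110, L, L0, L00, L01, Q, Q0, Q00, Q01, Q100, Q010, Q110) of formal power series in ℚ[[t]] satisfying the system (with T denoting Q0 − P01 + Q100 − P1100 + Q010 − P1010 + Q110 − P0110): K01 = P01; P01 = t + t·L·Q0; P1100 = t·K01 + t·L·Q100; P1010 = t·K01 + t·L·Q010; P0110 = t·L·Q110; L = 1 + L·Q; L0 = L·Q0; L00 = L·Q00; L01 = L·Q01; Q = 2t·L + t·L·(Q + 2·T); Q0 = t·L + t·L·(Q0 + T); Q00 = t·L0 + t·L·(Q00 + Q100 − P1100); Q01 = t·L0 + t + t·L·(Q01 + Q0 − P01 + Q010 − P1010 + Q110 − P0110); Q100 = t·L01 + t·L·(2·Q100 − P1100); Q010 = t·L01 + t·L·(2·Q010 − P1010); Q110 = t·L00 + t·L·(2·Q110 − P0110). Moreover, the series L of this unique solution satisfies the degree-6 equation 2t⁵·L⁶ − t⁴(t+8)·L⁵ − t³(3t²−16)·L⁴ + t²(2t+3)(2t−5)·L³ − t(2t²−7t−7)·L² − (5t+1)·L + 1 = 0 in ℚ[[t]]. -/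

import Mathlib

open PowerSeries

/-- The system (16) of the paper (prime decomposition, `k = 2`, after the
0/1 symmetry); `T` abbreviates
`Q0 − P01 + Q100 − P1100 + Q010 − P1010 + Q110 − P0110`. -/
def SysLp2 (K01 P01 P1100 P1010 P0110 L L0 L00 L01 Q Q0 Q00 Q01 Q100 Q010 Q110 :
    PowerSeries ℚ) : Prop :=
  K01 = P01 ∧
  P01 = X + X * L * Q0 ∧
  P1100 = X * K01 + X * L * Q100 ∧
  P1010 = X * K01 + X * L * Q010 ∧
  P0110 = X * L * Q110 ∧
  L = 1 + L * Q ∧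
  L0 = L * Q0 ∧
  L00 = L * Q00 ∧
  L01 = L * Q01 ∧
  Q = 2 * X * L + X * L *
      (Q + 2 * (Q0 - P01 + Q100 - P1100 + Q010 - P1010 + Q110 - P0110)) ∧
  Q0 = X * L + X * L *
      (Q0 + (Q0 - P01 + Q100 - P1100 + Q010 - P1010 + Q110 - P0110)) ∧
  Q00 = X * L0 + X * L * (Q00 + Q100 - P1100) ∧
  Q01 = X * L0 + X + X * L * (Q01 + Q0 - P01 + Q010 - P1010 + Q110 - P0110) ∧
  Q100 = X * L01 + X * L * (2 * Q100 - P1100) ∧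
  Q010 = X * L01 + X * L * (2 * Q010 - P1010) ∧
  Q110 = X * L00 + X * L * (2 * Q110 - P0110)

/-!
Substituting the equations for `Q, Q0, Q00, Q01` into those for `L, L0, L00, L01`, every
right-hand side of the system becomes a constant plus `X` times a polynomial in the unknowns.
The system is therefore a contraction for the `X`-adic metric on `ℚ⟦X⟧¹⁶` and has exactly
one solution, the limit of its iterates.

For the algebraic equation, every equation is linear in the unknowns other than `L`, with
coefficients in `ℤ[t, L]`. Cancelling the unit `1 − tL` gives `Q = 2 Q0` and
`Q010 − P1010 = Q100 − P1100`; after that, `(Q100 − P1100, Q110 − P0110, L00, L01, 1)` lies in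
the kernel of an explicit `5 × 5` matrix over `ℤ[t, L]`, whose determinant is `8 (1 − tL)`
times the sextic.
-/

open Function Matrix

section XAdicFixedPoint

variable {R ι : Type*} [CommRing R]

theorem PowerSeries.eq_of_forall_X_pow_dvd_sub {f g : R⟦X⟧}
    (h : ∀ n, (X : R⟦X⟧) ^ n ∣ f - g) : f = g := by
  ext m
  simpa [sub_eq_zero] using X_pow_dvd_iff.mp (h (m + 1)) m m.lt_succ_self

def IsXAdicContraction (G : (ι → R⟦X⟧) → ι → R⟦X⟧) : Prop :=
  ∀ n a b, (∀ i, (X : R⟦X⟧) ^ n ∣ a i - b i) → ∀ i, (X : R⟦X⟧) ^ (n + 1) ∣ G a i - G b i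

def IsXAdicNonexpansive (H : (ι → R⟦X⟧) → ι → R⟦X⟧) : Prop :=
  ∀ n a b, (∀ i, (X : R⟦X⟧) ^ n ∣ a i - b i) → ∀ i, (X : R⟦X⟧) ^ n ∣ H a i - H b i

theorem IsXAdicNonexpansive.isXAdicContraction_const_add_X_smul
    {H : (ι → R⟦X⟧) → ι → R⟦X⟧} (hH : IsXAdicNonexpansive H) (c : ι → R⟦X⟧) :
    IsXAdicContraction fun v ↦ c + (X : R⟦X⟧) • H v := by
  intro n a b hab i
  simpa [pow_succ', ← mul_sub] using mul_dvd_mul_left X (hH n a b hab i)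

/-- The `m`-th coefficient is read off `G^[m + 1] 0`, where it has stabilised. -/
noncomputable def xAdicLimit (G : (ι → R⟦X⟧) → ι → R⟦X⟧) : ι → R⟦X⟧ :=
  fun i ↦ PowerSeries.mk fun m ↦ coeff m (G^[m + 1] 0 i)

namespace IsXAdicContraction

variable {G : (ι → R⟦X⟧) → ι → R⟦X⟧} (hG : IsXAdicContraction G)
include hG

theorem X_pow_dvd_iterate_sub (n : ℕ) (a b : ι → R⟦X⟧) (i : ι) :
    (X : R⟦X⟧) ^ n ∣ G^[n] a i - G^[n] b i := by
  induction n generalizing i with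
  | zero => simp
  | succ n ih =>
    rw [iterate_succ_apply', iterate_succ_apply']
    exact hG n _ _ ih i

theorem X_pow_dvd_xAdicLimit_sub (n : ℕ) (i : ι) :
    (X : R⟦X⟧) ^ n ∣ xAdicLimit G i - G^[n] 0 i := by
  refine X_pow_dvd_iff.mpr fun m hm ↦ ?_
  obtain ⟨k, rfl⟩ := Nat.exists_eq_add_of_lt hm
  have h := X_pow_dvd_iff.mp (hG.X_pow_dvd_iterate_sub (m + 1) 0 (G^[k] 0) i) m m.lt_succ_self
  rw [← iterate_add_apply] at h
  simpa [xAdicLimit, sub_eq_zero, add_right_comm m 1 k] using h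

theorem isFixedPt_xAdicLimit : IsFixedPt G (xAdicLimit G) := by
  funext i
  refine eq_of_forall_X_pow_dvd_sub fun n ↦ ?_
  have h₁ := hG n _ _ (hG.X_pow_dvd_xAdicLimit_sub n) i
  have h₂ := hG.X_pow_dvd_xAdicLimit_sub (n + 1) i
  rw [iterate_succ_apply'] at h₂
  have h := dvd_sub h₁ h₂
  rw [sub_sub_sub_cancel_right] at h
  exact (pow_dvd_pow X n.le_succ).trans h

theorem existsUnique_isFixedPt : ∃! v, IsFixedPt G v := by
  refine ⟨xAdicLimit G, hG.isFixedPt_xAdicLimit, fun v hv ↦ ?_⟩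
  funext i
  refine eq_of_forall_X_pow_dvd_sub fun n ↦ ?_
  have h := hG.X_pow_dvd_iterate_sub n v (xAdicLimit G) i
  rwa [(hv.iterate n).eq, (hG.isFixedPt_xAdicLimit.iterate n).eq] at h

end IsXAdicContraction

end XAdicFixedPoint

def finSixteenArrowEquiv (α : Type*) :
    (Fin 16 → α) ≃ α × α × α × α × α × α × α × α × α × α × α × α × α × α × α × α where
  toFun v := (v 0, v 1, v 2, v 3, v 4, v 5, v 6, v 7, v 8, v 9, v 10, v 11, v 12, v 13, v 14, v 15)
  invFun x := ![x.1, x.2.1, x.2.2.1, x.2.2.2.1, x.2.2.2.2.1, x.2.2.2.2.2.1, x.2.2.2.2.2.2.1,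
    x.2.2.2.2.2.2.2.1, x.2.2.2.2.2.2.2.2.1, x.2.2.2.2.2.2.2.2.2.1, x.2.2.2.2.2.2.2.2.2.2.1,
    x.2.2.2.2.2.2.2.2.2.2.2.1, x.2.2.2.2.2.2.2.2.2.2.2.2.1, x.2.2.2.2.2.2.2.2.2.2.2.2.2.1,
    x.2.2.2.2.2.2.2.2.2.2.2.2.2.2.1, x.2.2.2.2.2.2.2.2.2.2.2.2.2.2.2]
  left_inv v := by funext i; fin_cases i <;> rfl
  right_inv _ := rfl

/-- `SysLp2` with the equations for `Q, Q0, Q00, Q01` substituted into those for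
`L, L0, L00, L01`: the system reads `v = Pi.single 5 1 + X • sysLp2Core v`. -/
noncomputable def sysLp2Core (v : Fin 16 → ℚ⟦X⟧) : Fin 16 → ℚ⟦X⟧ :=
  let K01 := v 0; let P01 := v 1; let P1100 := v 2; let P1010 := v 3; let P0110 := v 4
  let L := v 5; let L0 := v 6; let L00 := v 7; let L01 := v 8
  let Q := v 9; let Q0 := v 10; let Q00 := v 11; let Q01 := v 12
  let Q100 := v 13; let Q010 := v 14; let Q110 := v 15
  let T := Q0 - P01 + Q100 - P1100 + Q010 - P1010 + Q110 - P0110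
  let cQ := 2 * L + L * (Q + 2 * T)
  let cQ0 := L + L * (Q0 + T)
  let cQ00 := L0 + L * (Q00 + Q100 - P1100)
  let cQ01 := L0 + 1 + L * (Q01 + Q0 - P01 + Q010 - P1010 + Q110 - P0110)
  ![1 + L * Q0, 1 + L * Q0, K01 + L * Q100, K01 + L * Q010, L * Q110,
    L * cQ, L * cQ0, L * cQ00, L * cQ01, cQ, cQ0, cQ00, cQ01,
    L01 + L * (2 * Q100 - P1100), L01 + L * (2 * Q010 - P1010), L00 + L * (2 * Q110 - P0110)]

noncomputable def sysLp2Map (v : Fin 16 → ℚ⟦X⟧) : Fin 16 → ℚ⟦X⟧ :=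
  Pi.single 5 1 + (X : ℚ⟦X⟧) • sysLp2Core v

theorem sysLp2Core_isXAdicNonexpansive : IsXAdicNonexpansive sysLp2Core := by
  intro n a b hab i
  simp only [← Ideal.mem_span_singleton, ← Ideal.Quotient.eq] at hab ⊢
  fin_cases i <;> simp [sysLp2Core, hab]

theorem sysLp2Map_isXAdicContraction : IsXAdicContraction sysLp2Map :=
  sysLp2Core_isXAdicNonexpansive.isXAdicContraction_const_add_X_smul _

theorem sysLp2_iff_isFixedPt
    {K01 P01 P1100 P1010 P0110 L L0 L00 L01 Q Q0 Q00 Q01 Q100 Q010 Q110 : ℚ⟦X⟧} :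
    SysLp2 K01 P01 P1100 P1010 P0110 L L0 L00 L01 Q Q0 Q00 Q01 Q100 Q010 Q110 ↔
      IsFixedPt sysLp2Map
        ![K01, P01, P1100, P1010, P0110, L, L0, L00, L01, Q, Q0, Q00, Q01, Q100, Q010, Q110] := by
  simp only [IsFixedPt, funext_iff, Fin.forall_fin_succ]
  simp only [SysLp2, sysLp2Map, sysLp2Core, cons_val, cons_val_zero, cons_val_one, cons_val_succ,
    cons_val_fin_one, smul_cons, smul_eq_mul, smul_empty, Pi.add_apply, Pi.single_apply,
    Fin.succ_zero_eq_one, Fin.succ_one_eq_two, Fin.reduceSucc, Fin.reduceEq, ↓reduceIte, zero_add,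
    IsEmpty.forall_iff, and_true]
  constructor
  · rintro ⟨hK01, hP01, hP1100, hP1010, hP0110, hL, hL0, hL00, hL01, hQ, hQ0, hQ00, hQ01,
      hQ100, hQ010, hQ110⟩
    refine ⟨by linear_combination -hK01 - hP01, by linear_combination -hP01,
      by linear_combination -hP1100, by linear_combination -hP1010,
      by linear_combination -hP0110, by linear_combination -hL - L * hQ,
      by linear_combination -hL0 - L * hQ0, by linear_combination -hL00 - L * hQ00,
      by linear_combination -hL01 - L * hQ01, by linear_combination -hQ,
      by linear_combination -hQ0, by linear_combination -hQ00, by linear_combination -hQ01,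
      by linear_combination -hQ100, by linear_combination -hQ010, by linear_combination -hQ110⟩
  · rintro ⟨h0, h1, h2, h3, h4, h5, h6, h7, h8, h9, h10, h11, h12, h13, h14, h15⟩
    refine ⟨by linear_combination h1 - h0, by linear_combination -h1, by linear_combination -h2,
      by linear_combination -h3, by linear_combination -h4, by linear_combination -h5 + L * h9,
      by linear_combination -h6 + L * h10, by linear_combination -h7 + L * h11,
      by linear_combination -h8 + L * h12, by linear_combination -h9,
      by linear_combination -h10, by linear_combination -h11, by linear_combination -h12,
      by linear_combination -h13, by linear_combination -h14, by linear_combination -h15⟩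

section Elimination

variable {A : Type*} [CommRing A]

def sextic (t L : A) : A :=
  2 * t ^ 5 * L ^ 6 - t ^ 4 * (t + 8) * L ^ 5 - t ^ 3 * (3 * t ^ 2 - 16) * L ^ 4
    + t ^ 2 * (2 * t + 3) * (2 * t - 5) * L ^ 3 - t * (2 * t ^ 2 - 7 * t - 7) * L ^ 2
    - (5 * t + 1) * L + 1

/-- Columns: `Q100 − P1100, Q110 − P0110, L00, L01, 1`; rows: the relations coming from the
equations for `Q100`, `Q110`, `Q00`, `Q01` and `Q0`. -/
def eliminationMatrix (t L : A) : Matrix (Fin 5) (Fin 5) A :=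
  !![2 * (1 - t * L), 0, 0, -2 * t, t ^ 2 * (L + 1);
     0, 1 - t * L, -t, 0, 0;
     -2 * t * L ^ 2, 0, 2 * (1 - t * L), 0, -t * L * (L - 1);
     -2 * t * L ^ 2, -2 * t * L ^ 2, 0, 2 * (1 - t * L), -t * L ^ 2 * (2 - t - t * L);
     4 * t * L ^ 2, 2 * t * L ^ 2, 0, 0,
       1 - L - 2 * t * L + 4 * t * L ^ 2 - t ^ 2 * L ^ 2 * (1 + L)]

theorem det_eliminationMatrix (t L : A) :
    (eliminationMatrix t L).det = 8 * (1 - t * L) * sextic t L := by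
  simp only [eliminationMatrix, neg_mul, det_succ_row_zero, Nat.succ_eq_add_one, Nat.reduceAdd,
    of_apply, cons_val', cons_val_fin_one, cons_val_zero, submatrix_apply, Fin.succ_zero_eq_one,
    Fin.succAbove, cons_val_one, submatrix_submatrix, Function.comp_apply, Fin.succ_one_eq_two,
    cons_val, Fin.reduceSucc, det_unique, Fin.default_eq_zero, Fin.castSucc_zero,
    Fin.sum_univ_succ, Fin.coe_ofNat_eq_mod, Nat.zero_mod, pow_zero, one_mul, lt_self_iff_false,
    ↓reduceIte, Fin.castSucc_one, Finset.univ_unique, Fin.val_succ, Fin.val_eq_zero, zero_add,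
    pow_one, Fin.castSucc_succ, Fin.succ_pos, Finset.sum_neg_distrib, Finset.sum_singleton,
    not_lt_zero, Fin.reduceCastSucc, even_two, Even.neg_pow, one_pow, Fin.reduceLT,
    Fin.lt_one_iff, Fin.reduceEq, mul_zero, neg_zero, add_zero, zero_mul, neg_neg, mul_neg,
    cons_val_succ, sextic]
  ring

end Elimination

theorem SysLp2.sextic_eq_zero
    {K01 P01 P1100 P1010 P0110 L L0 L00 L01 Q Q0 Q00 Q01 Q100 Q010 Q110 : ℚ⟦X⟧}
    (h : SysLp2 K01 P01 P1100 P1010 P0110 L L0 L00 L01 Q Q0 Q00 Q01 Q100 Q010 Q110) :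
    sextic X L = 0 := by
  obtain ⟨hK01, hP01, hP1100, hP1010, hP0110, hL, hL0, hL00, hL01, hQ, hQ0, hQ00, hQ01,
    hQ100, hQ010, hQ110⟩ := h
  have hw : IsUnit (1 - X * L) := by simp [isUnit_iff_constantCoeff]
  have hQ2 : Q = 2 * Q0 := hw.mul_left_cancel (by linear_combination hQ - 2 * hQ0)
  have hD2 : Q010 - P1010 = Q100 - P1100 :=
    hw.mul_left_cancel (by linear_combination hQ010 - hP1010 - hQ100 + hP1100)
  have hLQ0 : 2 * L * Q0 = L - 1 := by linear_combination -hL - L * hQ2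
  have hD0 : 2 * L * (Q0 - P01) = (1 - X * L) * (L - 1) - 2 * X * L := by
    linear_combination (-2 * L) * hP01 + (1 - X * L) * hLQ0
  have hker : eliminationMatrix X L *ᵥ ![Q100 - P1100, Q110 - P0110, L00, L01, 1] = 0 := by
    funext i
    fin_cases i <;>
      simp only [mulVec, dotProduct, eliminationMatrix, of_apply, cons_val', cons_val,
        cons_val_zero, cons_val_one, cons_val_succ, cons_val_fin_one, Fin.sum_univ_succ,
        Finset.univ_unique, Finset.sum_singleton, Fin.default_eq_zero, Fin.reduceFinMk,
        Fin.zero_eta, Fin.mk_one, mul_one, zero_mul, zero_add, add_zero, Pi.zero_apply]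
    · linear_combination 2 * (hQ100 - hP1100) - 2 * X * hK01 - 2 * X * hP01 - X ^ 2 * hLQ0
    · linear_combination hQ110 - hP0110
    · linear_combination 2 * (1 - X * L) * hL00 + 2 * L * hQ00 + X * L * (2 * hL0 + hLQ0)
    · linear_combination 2 * (1 - X * L) * hL01 + 2 * L * hQ01 + 2 * X * L ^ 2 * hD2
        + X * L * (2 * hL0 + hLQ0) + X * L * hD0
    · linear_combination -2 * L * hQ0 - 2 * X * L ^ 2 * hD2 - X * L * hD0 + (1 - X * L) * hLQ0
  have hdet := det_eq_zero_of_mulVec_eq_zero_of_mem_nonZeroDivisors hker (i := 4)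
    (by simp [one_mem])
  rw [det_eliminationMatrix] at hdet
  have h8w : IsUnit (8 * (1 - X * L) : ℚ⟦X⟧) := by
    rw [isUnit_iff_constantCoeff, map_mul, map_ofNat]
    simp
  exact h8w.mul_right_eq_zero.mp hdet

/-- There is exactly one 16-tuple of power series in `ℚ[[t]]` satisfying the
system `SysLp2`, and the series `L` of this solution satisfies the degree-6
equation (19) of the paper (the algebraic equation for the generating
function of `𝕃⁽²⁾`). -/
theorem sysLp2_unique_and_sextic :
    (∃! v : PowerSeries ℚ × PowerSeries ℚ × PowerSeries ℚ × PowerSeries ℚ ×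
        PowerSeries ℚ × PowerSeries ℚ × PowerSeries ℚ × PowerSeries ℚ ×
        PowerSeries ℚ × PowerSeries ℚ × PowerSeries ℚ × PowerSeries ℚ ×
        PowerSeries ℚ × PowerSeries ℚ × PowerSeries ℚ × PowerSeries ℚ,
      SysLp2 v.1 v.2.1 v.2.2.1 v.2.2.2.1 v.2.2.2.2.1 v.2.2.2.2.2.1
        v.2.2.2.2.2.2.1 v.2.2.2.2.2.2.2.1 v.2.2.2.2.2.2.2.2.1
        v.2.2.2.2.2.2.2.2.2.1 v.2.2.2.2.2.2.2.2.2.2.1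
        v.2.2.2.2.2.2.2.2.2.2.2.1 v.2.2.2.2.2.2.2.2.2.2.2.2.1
        v.2.2.2.2.2.2.2.2.2.2.2.2.2.1 v.2.2.2.2.2.2.2.2.2.2.2.2.2.2.1
        v.2.2.2.2.2.2.2.2.2.2.2.2.2.2.2) ∧
    (∀ K01 P01 P1100 P1010 P0110 L L0 L00 L01 Q Q0 Q00 Q01 Q100 Q010 Q110 :
        PowerSeries ℚ,
      SysLp2 K01 P01 P1100 P1010 P0110 L L0 L00 L01 Q Q0 Q00 Q01 Q100 Q010 Q110 →
      2 * X ^ 5 * L ^ 6 - X ^ 4 * (X + 8) * L ^ 5 - X ^ 3 * (3 * X ^ 2 - 16) * L ^ 4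
        + X ^ 2 * (2 * X + 3) * (2 * X - 5) * L ^ 3
        - X * (2 * X ^ 2 - 7 * X - 7) * L ^ 2
        - (5 * X + 1) * L + 1 = 0) := by
  refine ⟨?_, fun _ _ _ _ _ _ _ _ _ _ _ _ _ _ _ _ h ↦ h.sextic_eq_zero⟩
  exact ((finSixteenArrowEquiv _).symm.existsUnique_congr fun _ ↦ sysLp2_iff_isFixedPt).mpr
    sysLp2Map_isXAdicContraction.existsUnique_isFixedPt
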